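/- For all n ≥ 1, the total number of 1-ascents in all dispersed Dyck paths of length n+2 is A(n+2) = 2^(n−1) + ((n+1)/2)·C(n, ⌊n/2⌋). -/

import Mathlib

inductive DStep | up | down | right
deriving DecidableEq, Repr

instance : Fintype DStep := ⟨{.up, .down, .right}, fun x => by cases x <;> simp⟩

/-- Run a dispersed Dyck path from height `h`; `none` if an illegal step occurs,
otherwise the final height. Down steps require positive height; right steps require height 0. -/
def DStep.run : ℕ → List DStep → Option ℕ
  | h, [] => some h
  | h, .up :: l => DStep.run (h + 1) l
  | h + 1, .down :: l => DStep.run h l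
  | 0, .down :: _ => none
  | 0, .right :: l => DStep.run 0 l
  | _ + 1, .right :: _ => none

/-- A dispersed Dyck path: starts and ends at height 0, all steps legal. -/
def IsDDP (l : List DStep) : Prop := DStep.run 0 l = some 0

instance : DecidablePred IsDDP := fun l => by unfold IsDDP; infer_instance

/-- The finset of all dispersed Dyck paths of length `n`. -/
def DDPs (n : ℕ) : Finset (List.Vector DStep n) :=
  Finset.univ.filter (fun v => IsDDP v.toList)

/-- Number of dispersed Dyck paths of length `n`. -/
def dD (n : ℕ) : ℕ := (DDPs n).card

/-- Total number of up steps over all DDPs of length `n`. -/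
def U (n : ℕ) : ℕ := ∑ v ∈ DDPs n, v.toList.count DStep.up

/-- Total number of down steps over all DDPs of length `n`. -/
def D (n : ℕ) : ℕ := ∑ v ∈ DDPs n, v.toList.count DStep.down

/-- Total number of right steps over all DDPs of length `n`. -/
def R (n : ℕ) : ℕ := ∑ v ∈ DDPs n, v.toList.count DStep.right

/-- `i` is the position of a 1-ascent in `l`: an up step with no adjacent up step. -/
def IsOneAscentAt (l : List DStep) (i : ℕ) : Prop :=
  l[i]? = some .up ∧ l[i + 1]? ≠ some .up ∧ (i = 0 ∨ l[i - 1]? ≠ some .up)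

instance (l : List DStep) : DecidablePred (IsOneAscentAt l) := fun i => by
  unfold IsOneAscentAt; infer_instance

/-- Number of 1-ascents in `l`. -/
def oneAsc (l : List DStep) : ℕ :=
  ((Finset.range l.length).filter (IsOneAscentAt l)).card

/-- Total number of 1-ascents over all DDPs of length `n`. -/
def A (n : ℕ) : ℕ := ∑ v ∈ DDPs n, oneAsc v.toList

/-- Signed final height of a plain path (ignoring any right steps). -/
def psum : List DStep → ℤ
  | [] => 0
  | .up :: l => 1 + psum l
  | .down :: l => -1 + psum l
  | .right :: l => psum l

/-!
Write `N h m`, `U h m`, `A h m` for the number of legal step lists of length `m` from height `h`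
down to `0`, their total number of up steps and of 1-ascents (DDPs are the case `h = 0`). Splitting
off the first step gives recursions in `m`, and by induction on `m`:

* `A h (m + 2) + U h m = (m + 1) N h m`. A 1-ascent is a peak `UD` not preceded by `U`; inserting `UD`
  at one of the `m + 1` places of a path of length `m` yields every peak exactly once, and inserting
  it right after an up step yields every peak preceded by `U`.
* `2 U h m + h N h m + (R h m + N h m) = (m + 1) N h m`, with `R` the number of right steps, since a
  path from `h` has `h` more down than up steps. Here `R h m + N h m = T (m + h) + T (m + h + 1)` with
  `T k = ∑_{2t ≥ k} C(m, t)`: by reflection, it counts the `±1`-walks from `h` that reach `0`.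

With `N h m = C(m, ⌊(m + h + 1)/2⌋)` and, by the symmetry of binomial coefficients,
`T n + T (n + 1) = 2^n` at `h = 0`, this gives `2 A 0 (n + 2) = (n + 1) C(n, ⌊n/2⌋) + 2^n`.
-/

open Finset

def List.Vector.consEquiv (α : Type*) (m : ℕ) : α × List.Vector α m ≃ List.Vector α (m + 1) where
  toFun p := p.1 ::ᵥ p.2
  invFun v := (v.head, v.tail)
  left_inv _ := by simp
  right_inv v := v.cons_head_tail

def pathSum : (List DStep → ℕ) → ℕ → ℕ → ℕ
  | f, h, 0 => if h = 0 then f [] else 0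
  | f, h, m + 1 => pathSum (fun l => f (.up :: l)) (h + 1) m +
      match h with
      | 0 => pathSum (fun l => f (.right :: l)) 0 m
      | h + 1 => pathSum (fun l => f (.down :: l)) h m

theorem pathSum_eq_sum (f : List DStep → ℕ) (h m : ℕ) :
    pathSum f h m =
      ∑ v : List.Vector DStep m, if DStep.run h v.toList = some 0 then f v.toList else 0 := by
  induction m generalizing f h with
  | zero =>
    rw [Fintype.sum_eq_single List.Vector.nil fun v hv => absurd v.eq_nil hv]
    simp [pathSum, DStep.run]
  | succ m ih =>
    rw [← (List.Vector.consEquiv DStep m).sum_comp, Fintype.sum_prod_type]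
    have hsteps : (univ : Finset DStep) = {.up, .down, .right} := by decide
    rw [hsteps, sum_insert (by decide), sum_insert (by decide), sum_singleton]
    cases h <;> simp [List.Vector.consEquiv, pathSum, ih, DStep.run]

theorem pathSum_succ_zero (f : List DStep → ℕ) (m : ℕ) :
    pathSum f 0 (m + 1) =
      pathSum (fun l => f (.up :: l)) 1 m + pathSum (fun l => f (.right :: l)) 0 m := rfl

theorem pathSum_succ_succ (f : List DStep → ℕ) (h m : ℕ) :
    pathSum f (h + 1) (m + 1) =
      pathSum (fun l => f (.up :: l)) (h + 2) m + pathSum (fun l => f (.down :: l)) h m := rfl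

theorem pathSum_add (f g : List DStep → ℕ) (h m : ℕ) :
    pathSum (fun l => f l + g l) h m = pathSum f h m + pathSum g h m := by
  induction m generalizing f g h with
  | zero => simp only [pathSum]; split_ifs <;> rfl
  | succ m ih => cases h <;> simp only [pathSum, ih] <;> ring

theorem pathSum_cons {f : List DStep → ℕ} {s : DStep} (hf : ∀ l, f (s :: l) = f l) (h m : ℕ) :
    pathSum (fun l => f (s :: l)) h m = pathSum f h m := by
  simp only [hf]

theorem pathSum_zero (h m : ℕ) : pathSum (fun _ => 0) h m = 0 := by
  induction m generalizing h with
  | zero => simp [pathSum]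
  | succ m ih => cases h <;> simp [pathSum, ih]

theorem A_eq_pathSum (n : ℕ) : A n = pathSum oneAsc 0 n := by
  rw [pathSum_eq_sum, A, DDPs, sum_filter]
  rfl

theorem isOneAscentAt_cons_zero (s : DStep) (l : List DStep) :
    IsOneAscentAt (s :: l) 0 ↔ s = .up ∧ l[0]? ≠ some .up := by
  simp [IsOneAscentAt]

theorem isOneAscentAt_cons_succ (s : DStep) (l : List DStep) (i : ℕ) :
    IsOneAscentAt (s :: l) (i + 1) ↔ IsOneAscentAt l i ∧ (i = 0 → s ≠ .up) := by
  cases i <;> simp [IsOneAscentAt, and_assoc]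

theorem oneAsc_cons (s : DStep) (l : List DStep) :
    oneAsc (s :: l) + (if s = .up ∧ IsOneAscentAt l 0 then 1 else 0) =
      (if s = .up ∧ l[0]? ≠ some .up then 1 else 0) + oneAsc l := by
  simp only [oneAsc, card_filter, List.length_cons]
  rw [sum_range_succ']
  simp only [isOneAscentAt_cons_succ, isOneAscentAt_cons_zero]
  cases l with
  | nil => simp [IsOneAscentAt]
  | cons x l =>
    simp only [List.length_cons, sum_range_succ' _ (l.length)]
    by_cases hs : s = .up <;> by_cases h0 : IsOneAscentAt (x :: l) 0 <;> simp [hs, h0] <;> ring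

theorem oneAsc_cons_of_ne_up {s : DStep} (hs : s ≠ .up) (l : List DStep) :
    oneAsc (s :: l) = oneAsc l := by
  simpa [hs] using oneAsc_cons s l

theorem pathSum_cons_up_count_up (h m : ℕ) :
    pathSum (fun l => (DStep.up :: l).count .up) h m =
      pathSum (List.count .up) h m + pathSum (fun _ => 1) h m := by
  simp [pathSum_add]

-- Prepending an up step to a path from `h + 1` creates a 1-ascent iff the path starts with a down
-- step, and destroys one iff it starts with `UD`.
theorem pathSum_cons_up_oneAsc (h m : ℕ) :
    pathSum (fun l => oneAsc (.up :: l)) (h + 1) (m + 2) + pathSum (fun _ => 1) (h + 1) m =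
      pathSum (fun _ => 1) h (m + 1) + pathSum oneAsc (h + 1) (m + 2) := by
  have hpeak : pathSum (fun l => if IsOneAscentAt l 0 then 1 else 0) (h + 1) (m + 2) =
      pathSum (fun _ => 1) (h + 1) m := by
    cases h <;> simp [pathSum, IsOneAscentAt, pathSum_zero]
  have hdown : pathSum (fun l => if l[0]? ≠ some .up then 1 else 0) (h + 1) (m + 2) =
      pathSum (fun _ => 1) h (m + 1) := by
    simp [pathSum, pathSum_zero]
  rw [← hpeak, ← hdown, ← pathSum_add, ← pathSum_add]
  simpa using congrArg (fun f => pathSum f (h + 1) (m + 2)) (funext (oneAsc_cons .up))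

theorem pathSum_oneAsc_add_pathSum_count_up (h m : ℕ) :
    pathSum oneAsc h (m + 2) + pathSum (List.count .up) h m =
      (m + 1) * pathSum (fun _ => 1) h m := by
  induction m generalizing h with
  | zero => rcases h with _ | _ | _ | h <;> simp [pathSum] <;> decide
  | succ m ih =>
    have hright : DStep.right ≠ .up := DStep.noConfusion
    have hdown : DStep.down ≠ .up := DStep.noConfusion
    cases h with
    | zero =>
      have hup := pathSum_cons_up_oneAsc 0 m
      rw [zero_add, pathSum_succ_zero _ m] at hup
      rw [pathSum_succ_zero oneAsc (m + 2), pathSum_succ_zero _ m, pathSum_succ_zero _ m,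
        pathSum_cons_up_count_up, pathSum_cons (oneAsc_cons_of_ne_up hright),
        pathSum_cons fun _ => List.count_cons_of_ne hright]
      linarith [ih 0, ih 1]
    | succ h =>
      have hup := pathSum_cons_up_oneAsc (h + 1) m
      rw [pathSum_succ_succ _ h m] at hup
      rw [pathSum_succ_succ oneAsc h (m + 2), pathSum_succ_succ _ h m, pathSum_succ_succ _ h m,
        pathSum_cons_up_count_up, pathSum_cons (oneAsc_cons_of_ne_up hdown),
        pathSum_cons fun _ => List.count_cons_of_ne hdown]
      linarith [ih h, ih (h + 2)]

theorem choose_half_eq_choose_half_succ (m : ℕ) : m.choose (m / 2) = m.choose ((m + 1) / 2) := by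
  rcases Nat.even_or_odd' m with ⟨r, rfl | rfl⟩
  · congr 1; omega
  · rw [show (2 * r + 1) / 2 = r by omega, show (2 * r + 1 + 1) / 2 = r + 1 by omega,
      Nat.choose_symm_half]

theorem pathSum_one_eq_choose (h m : ℕ) :
    pathSum (fun _ => 1) h m = m.choose ((m + h + 1) / 2) := by
  induction m generalizing h with
  | zero =>
    rcases h with _ | h
    · rfl
    · exact (Nat.choose_eq_zero_of_lt (by omega)).symm
  | succ m ih =>
    cases h with
    | zero =>
      rw [pathSum_succ_zero, ih, ih, show (m + 1 + 0 + 1) / 2 = m / 2 + 1 by omega,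
        Nat.choose_succ_succ', choose_half_eq_choose_half_succ, add_comm]
    | succ h =>
      rw [pathSum_succ_succ, ih, ih,
        show (m + 1 + (h + 1) + 1) / 2 = (m + h + 1) / 2 + 1 by omega, Nat.choose_succ_succ', add_comm]
      congr 2; omega

def chooseTail (m k : ℕ) : ℕ := ∑ t ∈ range (m + 1), if k ≤ 2 * t then m.choose t else 0

-- For `k = 0` the truncated `k - 1 = 0` is harmless: `0 ≤ 2 t` and `1 ≤ 2 (t + 1)` always hold.
theorem chooseTail_succ_succ (m k : ℕ) :
    chooseTail (m + 1) (k + 1) = chooseTail m (k + 1) + chooseTail m (k - 1) := by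
  have pascal : ∀ t, (if k + 1 ≤ 2 * (t + 1) then (m + 1).choose (t + 1) else 0) =
      (if k - 1 ≤ 2 * t then m.choose t else 0) +
        (if k + 1 ≤ 2 * (t + 1) then m.choose (t + 1) else 0) := by
    intro t
    rw [Nat.choose_succ_succ']
    split_ifs <;> omega
  have shift : (∑ t ∈ range (m + 1), if k + 1 ≤ 2 * (t + 1) then m.choose (t + 1) else 0) =
      chooseTail m (k + 1) := by
    rw [chooseTail, sum_range_succ, sum_range_succ' _ m]
    simp
  rw [chooseTail, sum_range_succ', sum_congr rfl fun t _ => pascal t, sum_add_distrib, shift]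
  simp [chooseTail, add_comm]

theorem chooseTail_eq_choose_add (m k : ℕ) :
    chooseTail m k = m.choose ((k + 1) / 2) + chooseTail m (k + 2) := by
  have split : ∀ t, (if k ≤ 2 * t then m.choose t else 0) =
      (if (k + 1) / 2 = t then m.choose t else 0) + (if k + 2 ≤ 2 * t then m.choose t else 0) := by
    intro t
    split_ifs <;> omega
  simp only [chooseTail]
  rw [sum_congr rfl fun t _ => split t, sum_add_distrib]
  simp only [sum_ite_eq, mem_range]
  split_ifs with hk
  · rfl
  · rw [Nat.choose_eq_zero_of_lt (by omega)]

theorem chooseTail_self_add_chooseTail_succ (n : ℕ) :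
    chooseTail n n + chooseTail n (n + 1) = 2 ^ n := by
  have reflect : chooseTail n (n + 1) = ∑ t ∈ range (n + 1), if n ≤ 2 * t then 0 else n.choose t := by
    rw [chooseTail, ← sum_range_reflect]
    refine sum_congr rfl fun t ht => ?_
    rw [mem_range] at ht
    rw [show n + 1 - 1 - t = n - t by omega, Nat.choose_symm (by omega)]
    split_ifs <;> omega
  rw [reflect, chooseTail, ← sum_add_distrib, ← Nat.sum_range_choose]
  exact sum_congr rfl fun t _ => by split_ifs <;> simp

theorem chooseTail_self_sub_one (m : ℕ) : chooseTail m (m - 1) = m.choose (m / 2) + chooseTail m (m + 1) := by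
  cases m with
  | zero => decide
  | succ m => exact chooseTail_eq_choose_add (m + 1) m

theorem two_mul_pathSum_count_up_add_chooseTail (h m : ℕ) :
    2 * pathSum (List.count .up) h m + (chooseTail m (m + h) + chooseTail m (m + h + 1)) +
      h * pathSum (fun _ => 1) h m = (m + 1) * pathSum (fun _ => 1) h m := by
  induction m generalizing h with
  | zero => rcases h with _ | h <;> simp [pathSum, chooseTail]
  | succ m ih =>
    have hright : DStep.right ≠ .up := DStep.noConfusion
    have hdown : DStep.down ≠ .up := DStep.noConfusion
    cases h with
    | zero =>
      have hcentral : pathSum (fun _ => 1) 0 m = m.choose (m / 2) := by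
        rw [pathSum_one_eq_choose, choose_half_eq_choose_half_succ, add_zero]
      have ih0 := ih 0
      have ih1 := ih 1
      simp only [add_zero, zero_mul] at ih0 ih1 ⊢
      rw [pathSum_succ_zero _ m, pathSum_succ_zero _ m, pathSum_cons_up_count_up,
        pathSum_cons fun _ => List.count_cons_of_ne hright, chooseTail_succ_succ m m,
        chooseTail_succ_succ m (m + 1), Nat.add_sub_cancel, chooseTail_self_sub_one]
      linarith
    | succ h =>
      have tail₁ : chooseTail (m + 1) (m + 1 + (h + 1)) =
          chooseTail m (m + h + 2) + chooseTail m (m + h) := by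
        rw [show m + 1 + (h + 1) = m + h + 1 + 1 by ring, chooseTail_succ_succ]; rfl
      have tail₂ : chooseTail (m + 1) (m + 1 + (h + 1) + 1) =
          chooseTail m (m + h + 2 + 1) + chooseTail m (m + h + 1) := by
        rw [show m + 1 + (h + 1) + 1 = m + h + 2 + 1 by ring, chooseTail_succ_succ]; rfl
      have ih2 := ih (h + 2)
      rw [← add_assoc m h 2] at ih2
      rw [pathSum_succ_succ _ h m, pathSum_succ_succ _ h m, pathSum_cons_up_count_up,
        pathSum_cons fun _ => List.count_cons_of_ne hdown, tail₁, tail₂]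
      linarith [ih h]

theorem oneAscents_closed_general (n : ℕ) :
    A (n + 2) = 2 ^ (n - 1) + (n + 1) * n.choose (n / 2) / 2 := by
  have hA := pathSum_oneAsc_add_pathSum_count_up 0 n
  have hU := two_mul_pathSum_count_up_add_chooseTail 0 n
  rw [add_zero, chooseTail_self_add_chooseTail_succ, zero_mul, add_zero] at hU
  have hN : pathSum (fun _ => 1) 0 n = n.choose (n / 2) := by
    rw [pathSum_one_eq_choose, add_zero, choose_half_eq_choose_half_succ]
  rw [hN] at hA hU
  rw [A_eq_pathSum]
  cases n with
  | zero => simp_all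
  | succ n =>
    rw [pow_succ] at hU
    simp only [add_tsub_cancel_right]
    omega

/-- For `n ≥ 1`, the total number of 1-ascents in all DDPs of length `n + 2` is
`2^(n-1) + ((n+1)/2) · C(n, ⌊n/2⌋)` (note `(n+1)·C(n,⌊n/2⌋)` is even). -/
theorem oneAscents_closed (n : ℕ) (hn : 1 ≤ n) :
    A (n + 2) = 2 ^ (n - 1) + (n + 1) * n.choose (n / 2) / 2 :=
  oneAscents_closed_general n
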